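/- Let R be a commutative Noetherian ring and K ∈ D^b_coh(R) a bounded complex with finitely generated cohomology. Then for each i, the set S^i(K) = { x ∈ Spec(R) : H^i(K ⊗^L_R κ(x)) ≠ 0 } is Zariski closed in Spec(R). -/

import Mathlib

/-!
Choosing bases of the free modules `K^{i-1}, K^i, K^{i+1}`, the fiber complex at `x` is the
complex of `κ(x)`-vector spaces whose differentials are the images of the two differential
matrices of `K`. Hence `H^i(K ⊗^L κ(x)) ≠ 0` exactly when the ranks of these specialized
matrices add up to less than `rank K^i`. The rank of the specialization of a fixed matrix is
lower semicontinuous on `Spec R`: the locus where it is at most `r` is the zero locus of the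
`(r + 1)`-minors. A sum of lower semicontinuous functions is lower semicontinuous, so the jump
locus is closed.
-/

open CategoryTheory

noncomputable abbrev resField (R : Type) [CommRing R] (p : PrimeSpectrum R) : Type :=
  IsLocalRing.ResidueField (Localization.AtPrime p.asIdeal)

noncomputable def resHom (R : Type) [CommRing R] (p : PrimeSpectrum R) :
    R →+* resField R p :=
  (IsLocalRing.residue (Localization.AtPrime p.asIdeal)).comp
    (algebraMap R (Localization.AtPrime p.asIdeal))

/-- The derived fiber `K ⊗^L_R κ(x)` of a complex `K` of flat (e.g. finite free)
modules, computed termwise. -/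
noncomputable def fiberCx (R : Type) [CommRing R] (K : CochainComplex (ModuleCat R) ℤ)
    (p : PrimeSpectrum R) : CochainComplex (ModuleCat (resField R p)) ℤ :=
  ((ModuleCat.extendScalars (resHom R p)).mapHomologicalComplex _).obj K

namespace Matrix

variable {m n : Type*}

section Field

variable {k : Type*} [Field k]

theorem exists_linearIndependent_rows_of_le_rank [Finite m] [Fintype n] (A : Matrix m n k)
    {s : ℕ} (h : s ≤ A.rank) : ∃ r : Fin s → m, LinearIndependent k (A.submatrix r id).row := by
  obtain ⟨κ, a, ha, hspan, hli⟩ := exists_linearIndependent' k A.row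
  have := Finite.of_injective a ha
  cases nonempty_fintype κ
  rw [rank_eq_finrank_span_row, ← hspan, finrank_span_eq_card hli] at h
  obtain ⟨e⟩ := Function.Embedding.nonempty_of_card_le (α := Fin s) (by simpa using h)
  exact ⟨a ∘ e, hli.comp e e.injective⟩

theorem rank_le_iff_forall_det_submatrix_eq_zero [Fintype m] [Fintype n] (A : Matrix m n k)
    (r : ℕ) :
    A.rank ≤ r ↔ ∀ (ri : Fin (r + 1) → m) (ci : Fin (r + 1) → n),
      (A.submatrix ri ci).det = 0 := by
  constructor
  · intro h ri ci
    by_contra hdet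
    have := (rank_of_det_ne_zero hdet).symm.trans_le ((A.rank_submatrix_le ri ci).trans h)
    simp at this
  · intro h
    by_contra! hr
    obtain ⟨ri, hri⟩ := A.exists_linearIndependent_rows_of_le_rank hr
    have hrows : (A.submatrix ri id)ᵀ.rank = r + 1 := by
      rw [rank_transpose, hri.rank_matrix, Fintype.card_fin]
    obtain ⟨ci, hci⟩ := (A.submatrix ri id)ᵀ.exists_linearIndependent_rows_of_le_rank hrows.ge
    have hunit : IsUnit (A.submatrix ri ci)ᵀ := linearIndependent_rows_iff_isUnit.1 hci
    rw [isUnit_iff_isUnit_det, det_transpose, isUnit_iff_ne_zero] at hunit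
    exact hunit (h ri ci)

end Field

/-- Row and column indices may repeat, which only adds zero minors. -/
def minors {R : Type*} [CommRing R] (A : Matrix m n R) (s : ℕ) : Set R :=
  Set.range fun p : (Fin s → m) × (Fin s → n) => (A.submatrix p.1 p.2).det

theorem rank_map_le_iff_minors_subset_ker [Fintype m] [Fintype n] {R k : Type*} [CommRing R]
    [Field k] (φ : R →+* k) (A : Matrix m n R) (r : ℕ) :
    (A.map φ).rank ≤ r ↔ A.minors (r + 1) ⊆ RingHom.ker φ := by
  simp only [rank_le_iff_forall_det_submatrix_eq_zero, minors, Set.range_subset_iff,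
    Prod.forall, SetLike.mem_coe, RingHom.mem_ker, RingHom.map_det, RingHom.mapMatrix_apply,
    submatrix_map]

end Matrix

theorem ker_resHom (R : Type) [CommRing R] (x : PrimeSpectrum R) :
    RingHom.ker (resHom R x) = x.asIdeal := by
  ext a
  rw [RingHom.mem_ker, resHom, RingHom.comp_apply, IsLocalRing.residue_eq_zero_iff,
    IsLocalization.AtPrime.to_map_mem_maximal_iff (Localization.AtPrime x.asIdeal) x.asIdeal]

theorem lowerSemicontinuous_rank_map_resHom {R : Type} [CommRing R] {m n : Type*} [Fintype m]
    [Fintype n] (A : Matrix m n R) :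
    LowerSemicontinuous fun x : PrimeSpectrum R => (A.map (resHom R x)).rank := by
  refine lowerSemicontinuous_iff_isClosed_preimage.2 fun r => ?_
  convert PrimeSpectrum.isClosed_zeroLocus (A.minors (r + 1)) using 1
  ext x
  rw [Set.mem_preimage, Set.mem_Iic, A.rank_map_le_iff_minors_subset_ker, ker_resHom,
    PrimeSpectrum.mem_zeroLocus]

namespace LinearMap

variable {k U V W : Type*} [Field k] [AddCommGroup U] [Module k U] [AddCommGroup V] [Module k V]
  [AddCommGroup W] [Module k W] [FiniteDimensional k V] {f : U →ₗ[k] V} {g : V →ₗ[k] W}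

theorem finrank_range_add_finrank_range_le (hgf : g ∘ₗ f = 0) :
    Module.finrank k (range f) + Module.finrank k (range g) ≤ Module.finrank k V := by
  rw [← g.finrank_range_add_finrank_ker]
  have := Submodule.finrank_mono (range_le_ker_iff.2 hgf)
  omega

theorem range_eq_ker_iff_finrank_range_add_finrank_range_eq (hgf : g ∘ₗ f = 0) :
    range f = ker g ↔
      Module.finrank k (range f) + Module.finrank k (range g) = Module.finrank k V := by
  rw [← g.finrank_range_add_finrank_ker, add_comm (Module.finrank k (range f)),
    Nat.add_left_cancel_iff]
  exact ⟨fun h => h ▸ rfl, Submodule.eq_of_le_of_finrank_eq (range_le_ker_iff.2 hgf)⟩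

end LinearMap

theorem LinearMap.finrank_range_baseChange {R A M N ι ι' : Type*} [CommRing R] [CommRing A]
    [Algebra R A] [AddCommGroup M] [Module R M] [AddCommGroup N] [Module R N]
    [Fintype ι] [DecidableEq ι] [Fintype ι'] (b : Module.Basis ι R M) (c : Module.Basis ι' R N)
    (f : M →ₗ[R] N) :
    Module.finrank A (range (f.baseChange A)) = ((toMatrix b c f).map (algebraMap R A)).rank := by
  rw [Matrix.rank_eq_finrank_range_toLin _ (Algebra.TensorProduct.basis A c)
    (Algebra.TensorProduct.basis A b), ← toMatrix_baseChange, Matrix.toLin_toMatrix]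

theorem HomologicalComplex.not_isZero_homology_iff_finrank_lt {k ι : Type*} [Field k]
    {c : ComplexShape ι} (C : HomologicalComplex (ModuleCat k) c) {i j l : ι}
    (hi : c.prev j = i) (hl : c.next j = l) [FiniteDimensional k (C.X j)] :
    ¬ Limits.IsZero (C.homology j) ↔
      Module.finrank k (LinearMap.range (C.d i j).hom) +
        Module.finrank k (LinearMap.range (C.d j l).hom) < Module.finrank k (C.X j) := by
  have hdd : (C.d j l).hom ∘ₗ (C.d i j).hom = 0 := by
    rw [← ModuleCat.hom_comp, C.d_comp_d, ModuleCat.hom_zero]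
  rw [← C.exactAt_iff_isZero_homology, C.exactAt_iff' i j l hi hl,
    ShortComplex.moduleCat_exact_iff_range_eq_ker]
  change ¬ LinearMap.range (C.d i j).hom = LinearMap.ker (C.d j l).hom ↔ _
  rw [LinearMap.range_eq_ker_iff_finrank_range_add_finrank_range_eq hdd,
    (LinearMap.finrank_range_add_finrank_range_le hdd).lt_iff_ne]

section Fiber

variable {R : Type} [CommRing R] (K : CochainComplex (ModuleCat R) ℤ)

theorem finrank_range_fiberCx_d (x : PrimeSpectrum R) {i j : ℤ} {ι ι' : Type*} [Fintype ι]
    [DecidableEq ι] [Fintype ι'] (b : Module.Basis ι R (K.X i)) (c : Module.Basis ι' R (K.X j)) :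
    Module.finrank (resField R x) (LinearMap.range ((fiberCx R K x).d i j).hom) =
      ((LinearMap.toMatrix b c (K.d i j).hom).map (resHom R x)).rank := by
  -- `fiberCx` extends scalars through this algebra structure, which is not defeq to the
  -- library's `Algebra R (resField R x)` instance.
  let _ : Algebra R (resField R x) := (resHom R x).toAlgebra
  exact LinearMap.finrank_range_baseChange b c (K.d i j).hom

theorem lowerSemicontinuous_finrank_range_fiberCx_d (i j : ℤ) [Module.Free R (K.X i)]
    [Module.Finite R (K.X i)] [Module.Free R (K.X j)] [Module.Finite R (K.X j)] :
    LowerSemicontinuous fun x =>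
      Module.finrank (resField R x) (LinearMap.range ((fiberCx R K x).d i j).hom) := by
  classical
  simp_rw [finrank_range_fiberCx_d K _ (Module.Free.chooseBasis R (K.X i))
    (Module.Free.chooseBasis R (K.X j))]
  exact lowerSemicontinuous_rank_map_resHom _

theorem not_isZero_homology_fiberCx_iff (x : PrimeSpectrum R) (i : ℤ) [Module.Free R (K.X i)]
    [Module.Finite R (K.X i)] :
    ¬ Limits.IsZero ((fiberCx R K x).homology i) ↔
      Module.finrank (resField R x) (LinearMap.range ((fiberCx R K x).d (i - 1) i).hom) +
        Module.finrank (resField R x) (LinearMap.range ((fiberCx R K x).d i (i + 1)).hom) <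
          Module.finrank R (K.X i) := by
  let _ : Algebra R (resField R x) := (resHom R x).toAlgebra
  have := x.nontrivial
  have hX : Module.finrank (resField R x) ((fiberCx R K x).X i) = Module.finrank R (K.X i) :=
    Module.finrank_baseChange
  have : FiniteDimensional (resField R x) ((fiberCx R K x).X i) :=
    Module.Finite.of_basis (Algebra.TensorProduct.basis _ (Module.Free.chooseBasis R (K.X i)))
  rw [← hX]
  exact (fiberCx R K x).not_isZero_homology_iff_finrank_lt (by simp) (by simp)

end Fiber

theorem jumpLocus_isClosed_general (R : Type) [CommRing R]
    (K : CochainComplex (ModuleCat R) ℤ)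
    (hfree : ∀ i, Module.Free R (K.X i)) (hfin : ∀ i, Module.Finite R (K.X i))
    (i : ℤ) :
    IsClosed {x : PrimeSpectrum R | ¬ Limits.IsZero ((fiberCx R K x).homology i)} := by
  have hsemicont := ((lowerSemicontinuous_finrank_range_fiberCx_d K (i - 1) i).add
    (lowerSemicontinuous_finrank_range_fiberCx_d K i (i + 1))).add
      (lowerSemicontinuous_const (z := 1))
  convert hsemicont.isClosed_preimage (Module.finrank R (K.X i)) using 1
  ext x
  rw [Set.mem_ofPred, not_isZero_homology_fiberCx_iff, Set.mem_preimage, Set.mem_Iic,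
    Nat.lt_iff_add_one_le]

/-- Let `R` be Noetherian and `K ∈ D^b_coh(R)`, represented by a bounded above complex
of finite free modules with bounded, finitely generated cohomology. Then for each `i`
the cohomology jump locus `S^i(K) = { x ∈ Spec R : H^i(K ⊗^L_R κ(x)) ≠ 0 }` is
Zariski closed in `Spec R`. -/
theorem jumpLocus_isClosed (R : Type) [CommRing R] [IsNoetherianRing R]
    (K : CochainComplex (ModuleCat R) ℤ)
    (hfree : ∀ i, Module.Free R (K.X i)) (hfin : ∀ i, Module.Finite R (K.X i))
    (b : ℤ) (hbddAbove : ∀ i, b < i → Limits.IsZero (K.X i))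
    (a : ℤ) (hcohBdd : ∀ i, i < a → Limits.IsZero (K.homology i))
    (hcohFin : ∀ i, Module.Finite R (K.homology i))
    (i : ℤ) :
    IsClosed {x : PrimeSpectrum R | ¬ Limits.IsZero ((fiberCx R K x).homology i)} :=
  jumpLocus_isClosed_general R K hfree hfin i
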